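/- With the notation of the context, the quadratic form 𝓔^{μ,F}(u,u) := 𝓔(u,u) − ∬_{ℝ^d×ℝ^d} u(x)u(y)(e^{F(x,y)}−1)n(x,y) dy dx − ∫u²dμ⁺ + ∫u²dμ⁻ satisfies the identity 𝓔^{μ,F}(u,u) = 𝓔⁻(u,u) + (1/2)∬_{ℝ^d×ℝ^d} (u(x)−u(y))² G⁺(x,y) n(x,y) dx dy − ∫_{ℝ^d} u² dρ⁺, and all integrals appearing are finite. -/

import Mathlib

noncomputable section

open MeasureTheory Real ENNReal Set
open scoped Classical

/-- The state space `ℝ^d` with the Euclidean norm and Lebesgue measure. -/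
abbrev V (d : ℕ) := EuclideanSpace ℝ (Fin d)

/-- `I(r) = ∫₀^∞ s^{(d+α)/2-1} e^{-s/4 - r²/s} ds`. -/
def Ifun (d : ℕ) (α r : ℝ) : ℝ :=
  ∫ s in Set.Ioi (0 : ℝ), s ^ (((d : ℝ) + α) / 2 - 1) * Real.exp (-s / 4 - r ^ 2 / s)

/-- `ψ(r) = I(r)/I(0)`. -/
def psi (d : ℕ) (α r : ℝ) : ℝ := Ifun d α r / Ifun d α 0

/-- The constant `C(d,-α) = α Γ((d+α)/2) / (2^{1-α} π^{d/2} Γ(1-α/2))`. -/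
def Cconst (d : ℕ) (α : ℝ) : ℝ :=
  α * Real.Gamma (((d : ℝ) + α) / 2) /
    (2 ^ (1 - α) * Real.pi ^ ((d : ℝ) / 2) * Real.Gamma (1 - α / 2))

/-- Jump kernel density `n(x,y) = 2C(d,-α) ψ(m^{1/α}|x-y|) |x-y|^{-(d+α)}` for `x ≠ y`,
with `n(x,x) = 0`. -/
def nker (d : ℕ) (α m : ℝ) (x y : V d) : ℝ :=
  if x = y then 0
  else 2 * Cconst d α * psi d α (m ^ (1 / α) * ‖x - y‖) / ‖x - y‖ ^ ((d : ℝ) + α)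

/-- `F⁺ = F ∨ 0`. -/
def Fp (d : ℕ) (F : V d → V d → ℝ) (x y : V d) : ℝ := max (F x y) 0

/-- `F⁻ = -(F ∧ 0)`. -/
def Fm (d : ℕ) (F : V d → V d → ℝ) (x y : V d) : ℝ := -(min (F x y) 0)

/-- `G⁺ = (e^{F⁺} - 1) e^{-F⁻}`. -/
def Gp (d : ℕ) (F : V d → V d → ℝ) (x y : V d) : ℝ :=
  (Real.exp (Fp d F x y) - 1) * Real.exp (-(Fm d F x y))

/-- `G⁻ = 1 - e^{-F⁻}`. -/
def Gm (d : ℕ) (F : V d → V d → ℝ) (x y : V d) : ℝ := 1 - Real.exp (-(Fm d F x y))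

/-- The Dirichlet form `𝓔(u,u) = (1/2)∬ (u(x)-u(y))² n(x,y) dx dy` (in `[0,∞]`). -/
def En (d : ℕ) (α m : ℝ) (u : V d → ℝ) : ℝ≥0∞ :=
  (1 / 2) * ∫⁻ x, ∫⁻ y, ENNReal.ofReal ((u x - u y) ^ 2 * nker d α m x y)

/-- The jump-type energy `∬ (u(x)-u(y))² G(x,y) n(x,y) dx dy` (in `[0,∞]`). -/
def Jform (d : ℕ) (α m : ℝ) (G : V d → V d → ℝ) (u : V d → ℝ) : ℝ≥0∞ :=
  ∫⁻ x, ∫⁻ y, ENNReal.ofReal ((u x - u y) ^ 2 * G x y * nker d α m x y)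

/-- `NG(x) = ∫ G(x,y) n(x,y) dy` (in `[0,∞]`). -/
def NG (d : ℕ) (α m : ℝ) (G : V d → V d → ℝ) (x : V d) : ℝ≥0∞ :=
  ∫⁻ y, ENNReal.ofReal (G x y * nker d α m x y)

/-- `ρ = μ + ξ_G` where `ξ_G(dx) = NG(x) dx`. -/
def rho (d : ℕ) (α m : ℝ) (G : V d → V d → ℝ) (μ : Measure (V d)) : Measure (V d) :=
  μ + volume.withDensity (NG d α m G)

/-- `∫ u² dμ` (in `[0,∞]`). -/
def sqInt (d : ℕ) (u : V d → ℝ) (μ : Measure (V d)) : ℝ≥0∞ :=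
  ∫⁻ x, ENNReal.ofReal ((u x) ^ 2) ∂μ

/-- The cross term `∬ u(x)u(y)(e^{F(x,y)}-1) n(x,y) dy dx` (Lebesgue–Bochner integral on the
product space). -/
def crossInt (d : ℕ) (α m : ℝ) (F : V d → V d → ℝ) (u : V d → ℝ) : ℝ :=
  ∫ p : V d × V d, u p.1 * u p.2 * (Real.exp (F p.1 p.2) - 1) * nker d α m p.1 p.2

/-- The quadratic form
`𝓔^{μ,F}(u,u) = 𝓔(u,u) - ∬ u(x)u(y)(e^{F(x,y)}-1)n(x,y) dy dx - ∫ u² dμ⁺ + ∫ u² dμ⁻`. -/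
def EmuF (d : ℕ) (α m : ℝ) (F : V d → V d → ℝ) (μp μm : Measure (V d)) (u : V d → ℝ) : ℝ :=
  (En d α m u).toReal - crossInt d α m F u - (sqInt d u μp).toReal + (sqInt d u μm).toReal

/-- The killed form
`𝓔⁻(u,u) = (1/2)∬ (u(x)-u(y))² e^{-F⁻(x,y)} n(x,y) dx dy + ∫ u² dρ⁻` (in `[0,∞]`). -/
def EnMinus (d : ℕ) (α m : ℝ) (F : V d → V d → ℝ) (μm : Measure (V d)) (u : V d → ℝ) : ℝ≥0∞ :=
  (1 / 2) * (∫⁻ x, ∫⁻ y, ENNReal.ofReal ((u x - u y) ^ 2 * Real.exp (-(Fm d F x y)) * nker d α m x y))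
    + sqInt d u (rho d α m (Gm d F) μm)


/-! For a symmetric nonnegative kernel `k` with `∬ u(x)² k < ∞`, the two diagonal terms
`∬ u(x)² k` and `∬ u(y)² k` agree by symmetry and dominate `|u(x) u(y)| k`, so
`(1/2) ∬ (u(x) - u(y))² k = ∬ u(x)² k - ∬ u(x) u(y) k` with every term finite. Since
`e^F - 1 = G⁺ - G⁻` and `1 = e^{-F⁻} + G⁻`, applying this to `k = G^± n`, for which
`∬ u(x)² G^± n = ∫ u² NG^±`, turns the cross term of `𝓔^{μ,F}` and the `G⁻`-part of `𝓔` into the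
killing and jump terms of the right-hand side. -/

section SymmetricKernel

variable {X : Type*} [MeasurableSpace X] {ν : Measure X} [SFinite ν] {k : X → X → ℝ} {u : X → ℝ}

theorem measurable_sq_mul (hu : Measurable u) (hk : Measurable (Function.uncurry k)) :
    Measurable (Function.uncurry fun x y => u x ^ 2 * k x y) :=
  ((hu.comp measurable_fst).pow_const 2).mul hk

theorem measurable_sub_sq_mul (hu : Measurable u) (hk : Measurable (Function.uncurry k)) :
    Measurable (Function.uncurry fun x y => (u x - u y) ^ 2 * k x y) :=
  (((hu.comp measurable_fst).sub (hu.comp measurable_snd)).pow_const 2).mul hk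

theorem integral_sq_snd_mul_eq_of_symm (hks : ∀ x y, k x y = k y x) :
    ∫ p, u p.2 ^ 2 * k p.1 p.2 ∂ν.prod ν = ∫ p, u p.1 ^ 2 * k p.1 p.2 ∂ν.prod ν := by
  rw [← integral_prod_swap]
  simp only [Prod.fst_swap, Prod.snd_swap, hks]

theorem MeasureTheory.Integrable.sq_snd_mul_of_symm (hks : ∀ x y, k x y = k y x)
    (h : Integrable (fun p : X × X => u p.1 ^ 2 * k p.1 p.2) (ν.prod ν)) :
    Integrable (fun p : X × X => u p.2 ^ 2 * k p.1 p.2) (ν.prod ν) := by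
  simpa only [Function.comp_def, Prod.fst_swap, Prod.snd_swap, hks] using h.swap

theorem MeasureTheory.Integrable.mul_mul_of_sq_mul (hu : Measurable u)
    (hk : Measurable (Function.uncurry k)) (hk0 : ∀ x y, 0 ≤ k x y) (hks : ∀ x y, k x y = k y x)
    (h : Integrable (fun p : X × X => u p.1 ^ 2 * k p.1 p.2) (ν.prod ν)) :
    Integrable (fun p : X × X => u p.1 * u p.2 * k p.1 p.2) (ν.prod ν) := by
  refine (h.add (h.sq_snd_mul_of_symm hks)).mono' ?_ (.of_forall fun p => ?_)
  · exact (((hu.comp measurable_fst).mul (hu.comp measurable_snd)).mul hk).aestronglyMeasurable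
  have hab : |u p.1 * u p.2| ≤ u p.1 ^ 2 + u p.2 ^ 2 := by
    rw [abs_mul]
    nlinarith [sq_nonneg (|u p.1| - |u p.2|), sq_abs (u p.1), sq_abs (u p.2), abs_nonneg (u p.1),
      abs_nonneg (u p.2)]
  rw [Real.norm_eq_abs, abs_mul, abs_of_nonneg (hk0 _ _), Pi.add_apply, ← add_mul]
  exact mul_le_mul_of_nonneg_right hab (hk0 _ _)

theorem MeasureTheory.Integrable.sub_sq_mul_of_sq_mul (hu : Measurable u)
    (hk : Measurable (Function.uncurry k)) (hk0 : ∀ x y, 0 ≤ k x y) (hks : ∀ x y, k x y = k y x)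
    (h : Integrable (fun p : X × X => u p.1 ^ 2 * k p.1 p.2) (ν.prod ν)) :
    Integrable (fun p : X × X => (u p.1 - u p.2) ^ 2 * k p.1 p.2) (ν.prod ν) := by
  refine ((h.add (h.sq_snd_mul_of_symm hks)).sub
    ((h.mul_mul_of_sq_mul hu hk hk0 hks).const_mul 2)).congr (.of_forall fun p => ?_)
  simp only [Pi.add_apply, Pi.sub_apply]
  ring

theorem integral_sub_sq_mul_eq_of_symm (hu : Measurable u)
    (hk : Measurable (Function.uncurry k)) (hk0 : ∀ x y, 0 ≤ k x y) (hks : ∀ x y, k x y = k y x)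
    (h : Integrable (fun p : X × X => u p.1 ^ 2 * k p.1 p.2) (ν.prod ν)) :
    ∫ p, (u p.1 - u p.2) ^ 2 * k p.1 p.2 ∂ν.prod ν
      = 2 * (∫ p, u p.1 ^ 2 * k p.1 p.2 ∂ν.prod ν - ∫ p, u p.1 * u p.2 * k p.1 p.2 ∂ν.prod ν) := by
  have hsnd := h.sq_snd_mul_of_symm hks
  have hmix := h.mul_mul_of_sq_mul hu hk hk0 hks
  calc ∫ p, (u p.1 - u p.2) ^ 2 * k p.1 p.2 ∂ν.prod ν
      = ∫ p, (u p.1 ^ 2 * k p.1 p.2 + u p.2 ^ 2 * k p.1 p.2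
          - 2 * (u p.1 * u p.2 * k p.1 p.2)) ∂ν.prod ν := by
        congr 1 with p; ring
    _ = _ := by
        rw [integral_sub (f := fun p => _ + _) (h.add hsnd) (hmix.const_mul 2),
          integral_add h hsnd, integral_const_mul, integral_sq_snd_mul_eq_of_symm hks]
        ring

end SymmetricKernel

section IteratedLintegral

variable {X : Type*} [MeasurableSpace X] {ν : Measure X} [SFinite ν] {h : X → X → ℝ}

theorem toReal_lintegral_lintegral_ofReal (hh : Measurable (Function.uncurry h))
    (h0 : ∀ x y, 0 ≤ h x y) :
    (∫⁻ x, ∫⁻ y, ENNReal.ofReal (h x y) ∂ν ∂ν).toReal = ∫ p, h p.1 p.2 ∂ν.prod ν := by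
  rw [lintegral_lintegral hh.ennreal_ofReal.aemeasurable]
  exact (integral_eq_lintegral_of_nonneg_ae (.of_forall fun p : X × X => h0 p.1 p.2)
    hh.aestronglyMeasurable).symm

theorem lintegral_lintegral_ofReal_ne_top_iff (hh : Measurable (Function.uncurry h))
    (h0 : ∀ x y, 0 ≤ h x y) :
    ∫⁻ x, ∫⁻ y, ENNReal.ofReal (h x y) ∂ν ∂ν ≠ ⊤ ↔ Integrable (fun p => h p.1 p.2) (ν.prod ν) := by
  rw [lintegral_lintegral hh.ennreal_ofReal.aemeasurable]
  exact lintegral_ofReal_ne_top_iff_integrable hh.aestronglyMeasurable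
    (.of_forall fun p => h0 p.1 p.2)

end IteratedLintegral

theorem measurable_Ifun (d : ℕ) (α : ℝ) : Measurable (Ifun d α) := by
  have h : StronglyMeasurable
      (fun p : ℝ × ℝ => p.2 ^ (((d : ℝ) + α) / 2 - 1) * Real.exp (-p.2 / 4 - p.1 ^ 2 / p.2)) :=
    Measurable.stronglyMeasurable (by fun_prop)
  exact (h.integral_prod_right' (ν := volume.restrict (Ioi 0))).measurable

theorem Ifun_nonneg (d : ℕ) (α r : ℝ) : 0 ≤ Ifun d α r :=
  setIntegral_nonneg measurableSet_Ioi fun _ hs =>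
    mul_nonneg (rpow_nonneg (le_of_lt hs) _) (exp_nonneg _)

theorem Cconst_nonneg (d : ℕ) {α : ℝ} (hα0 : 0 < α) (hα2 : α < 2) : 0 ≤ Cconst d α := by
  have := Gamma_pos_of_pos (show 0 < ((d : ℝ) + α) / 2 by positivity)
  have := Gamma_pos_of_pos (show 0 < 1 - α / 2 by linarith)
  unfold Cconst
  positivity

theorem nker_nonneg (d : ℕ) {α : ℝ} (m : ℝ) (hα0 : 0 < α) (hα2 : α < 2) (x y : V d) :
    0 ≤ nker d α m x y := by
  have := Cconst_nonneg d hα0 hα2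
  have := div_nonneg (Ifun_nonneg d α (m ^ (1 / α) * ‖x - y‖)) (Ifun_nonneg d α 0)
  unfold nker psi
  split_ifs <;> positivity

theorem nker_comm (d : ℕ) (α m : ℝ) (x y : V d) : nker d α m x y = nker d α m y x := by
  simp only [nker, eq_comm (a := x), norm_sub_rev x y]

theorem measurable_nker (d : ℕ) (α m : ℝ) : Measurable (Function.uncurry (nker d α m)) := by
  have hψ : Measurable (psi d α) := (measurable_Ifun d α).div_const _
  refine Measurable.ite (isClosed_eq continuous_fst continuous_snd).measurableSet
    measurable_const ?_
  exact (measurable_const.mul (hψ.comp (by fun_prop))).div (by fun_prop)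

section Perturbation

variable {d : ℕ} (F : V d → V d → ℝ)

theorem Fm_nonneg (x y : V d) : 0 ≤ Fm d F x y :=
  neg_nonneg.2 (min_le_right _ _)

theorem Gp_nonneg (x y : V d) : 0 ≤ Gp d F x y :=
  mul_nonneg (sub_nonneg.2 (one_le_exp (le_max_right _ _))) (exp_nonneg _)

theorem Gm_nonneg (x y : V d) : 0 ≤ Gm d F x y :=
  sub_nonneg.2 (exp_le_one_iff.2 (neg_nonpos.2 (Fm_nonneg F x y)))

theorem Gp_comm (hF : ∀ x y, F x y = F y x) (x y : V d) : Gp d F x y = Gp d F y x := by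
  simp only [Gp, Fp, Fm, hF x y]

theorem Gm_comm (hF : ∀ x y, F x y = F y x) (x y : V d) : Gm d F x y = Gm d F y x := by
  simp only [Gm, Fm, hF x y]

theorem exp_neg_Fm_add_Gm : (fun x y => exp (-Fm d F x y)) + Gm d F = fun _ _ => 1 := by
  ext x y
  simp only [Pi.add_apply, Gm]
  ring

-- `e^F = e^{F⁺} e^{-F⁻}` because `F = F⁺ - F⁻`.
theorem exp_sub_one_eq_Gp_sub_Gm (x y : V d) : exp (F x y) - 1 = Gp d F x y - Gm d F x y := by
  simp only [Gp, Gm, Fp, Fm, neg_neg]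
  rw [sub_mul, one_mul, ← exp_add, max_add_min, add_zero]
  ring

variable {F}

theorem measurable_Fm (hF : Measurable (Function.uncurry F)) :
    Measurable (Function.uncurry (Fm d F)) :=
  (hF.min measurable_const).neg

theorem measurable_Gp (hF : Measurable (Function.uncurry F)) :
    Measurable (Function.uncurry (Gp d F)) :=
  ((hF.max measurable_const).exp.sub measurable_const).mul (measurable_Fm hF).neg.exp

theorem measurable_Gm (hF : Measurable (Function.uncurry F)) :
    Measurable (Function.uncurry (Gm d F)) :=
  measurable_const.sub (measurable_Fm hF).neg.exp

end Perturbation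

section JumpForms

variable {d : ℕ} {α m : ℝ} {u : V d → ℝ} {G G₁ G₂ : V d → V d → ℝ}

theorem measurable_uncurry_mul_nker (hG : Measurable (Function.uncurry G)) :
    Measurable (Function.uncurry fun x y => G x y * nker d α m x y) :=
  hG.mul (measurable_nker d α m)

theorem mul_nker_nonneg (hα0 : 0 < α) (hα2 : α < 2) (hG0 : ∀ x y, 0 ≤ G x y) (x y : V d) :
    0 ≤ G x y * nker d α m x y :=
  mul_nonneg (hG0 x y) (nker_nonneg d m hα0 hα2 x y)

theorem mul_nker_comm (hGs : ∀ x y, G x y = G y x) (x y : V d) :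
    G x y * nker d α m x y = G y x * nker d α m y x := by
  rw [hGs, nker_comm]

theorem Jform_eq_lintegral_lintegral :
    Jform d α m G u
      = ∫⁻ x, ∫⁻ y, ENNReal.ofReal ((u x - u y) ^ 2 * (G x y * nker d α m x y)) := by
  simp only [Jform, mul_assoc]

theorem Jform_add (hα0 : 0 < α) (hα2 : α < 2) (hu : Measurable u)
    (hG₁ : Measurable (Function.uncurry G₁)) (hG₂ : Measurable (Function.uncurry G₂))
    (hG₁0 : ∀ x y, 0 ≤ G₁ x y) (hG₂0 : ∀ x y, 0 ≤ G₂ x y) :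
    Jform d α m (G₁ + G₂) u = Jform d α m G₁ u + Jform d α m G₂ u := by
  have hmeas : ∀ G : V d → V d → ℝ, Measurable (Function.uncurry G) →
      Measurable fun p : V d × V d =>
        ENNReal.ofReal ((u p.1 - u p.2) ^ 2 * (G p.1 p.2 * nker d α m p.1 p.2)) := fun G hG =>
    (measurable_sub_sq_mul hu (measurable_uncurry_mul_nker hG)).ennreal_ofReal
  simp only [Jform_eq_lintegral_lintegral]
  rw [lintegral_lintegral (hmeas (G₁ + G₂) (hG₁.add hG₂)).aemeasurable,
    lintegral_lintegral (hmeas _ hG₁).aemeasurable, lintegral_lintegral (hmeas _ hG₂).aemeasurable,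
    ← lintegral_add_left (hmeas _ hG₁)]
  congr with p
  rw [← ENNReal.ofReal_add (mul_nonneg (sq_nonneg _) (mul_nker_nonneg hα0 hα2 hG₁0 p.1 p.2))
    (mul_nonneg (sq_nonneg _) (mul_nker_nonneg hα0 hα2 hG₂0 p.1 p.2)), Pi.add_apply, Pi.add_apply]
  ring_nf

theorem En_eq_half_Jform (hα0 : 0 < α) (hα2 : α < 2) (hu : Measurable u) {F : V d → V d → ℝ}
    (hF : Measurable (Function.uncurry F)) :
    En d α m u
      = 1 / 2 * (Jform d α m (fun x y => exp (-Fm d F x y)) u + Jform d α m (Gm d F) u) := by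
  rw [← Jform_add (G₁ := fun x y => exp (-Fm d F x y)) hα0 hα2 hu (measurable_Fm hF).neg.exp
    (measurable_Gm hF) (fun _ _ => exp_nonneg _) (Gm_nonneg F), exp_neg_Fm_add_Gm]
  simp only [En, Jform, mul_one]

theorem Jform_exp_neg_Fm_ne_top (hα0 : 0 < α) (hα2 : α < 2) (hu : Measurable u)
    {F : V d → V d → ℝ} (hF : Measurable (Function.uncurry F)) (hE : En d α m u ≠ ⊤) :
    Jform d α m (fun x y => exp (-Fm d F x y)) u ≠ ⊤ := by
  rw [En_eq_half_Jform hα0 hα2 hu hF] at hE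
  exact (ENNReal.add_ne_top.1 (ENNReal.lt_top_of_mul_ne_top_right hE (by norm_num)).ne).1

theorem lintegral_sq_mul_NG :
    ∫⁻ x, ENNReal.ofReal (u x ^ 2) * NG d α m G x
      = ∫⁻ x, ∫⁻ y, ENNReal.ofReal (u x ^ 2 * (G x y * nker d α m x y)) := by
  congr with x
  rw [NG, ← lintegral_const_mul' _ _ ENNReal.ofReal_ne_top]
  simp only [ENNReal.ofReal_mul (sq_nonneg _)]

theorem sqInt_rho (hu : Measurable u) (hG : Measurable (Function.uncurry G)) (μ : Measure (V d)) :
    sqInt d u (rho d α m G μ) = sqInt d u μ + ∫⁻ x, ENNReal.ofReal (u x ^ 2) * NG d α m G x := by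
  have hNG : Measurable (NG d α m G) :=
    (measurable_uncurry_mul_nker hG).ennreal_ofReal.lintegral_prod_right
  rw [sqInt, rho, lintegral_add_measure,
    lintegral_withDensity_eq_lintegral_mul _ hNG (hu.pow_const 2).ennreal_ofReal]
  simp only [Pi.mul_apply, mul_comm]
  rfl

theorem EnMinus_eq {F : V d → V d → ℝ} (hu : Measurable u)
    (hGm : Measurable (Function.uncurry (Gm d F))) (μ : Measure (V d)) :
    EnMinus d α m F μ u = 1 / 2 * Jform d α m (fun x y => exp (-Fm d F x y)) u
      + (sqInt d u μ + ∫⁻ x, ENNReal.ofReal (u x ^ 2) * NG d α m (Gm d F) x) := by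
  rw [EnMinus, sqInt_rho hu hGm]
  rfl

theorem integrable_sq_mul_nker_of_lintegral_NG_ne_top (hα0 : 0 < α) (hα2 : α < 2)
    (hu : Measurable u) (hG : Measurable (Function.uncurry G)) (hG0 : ∀ x y, 0 ≤ G x y)
    (hNG : ∫⁻ x, ENNReal.ofReal (u x ^ 2) * NG d α m G x ≠ ⊤) :
    Integrable (fun p : V d × V d => u p.1 ^ 2 * (G p.1 p.2 * nker d α m p.1 p.2))
      (volume.prod volume) := by
  rw [lintegral_sq_mul_NG] at hNG
  exact (lintegral_lintegral_ofReal_ne_top_iff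
    (measurable_sq_mul hu (measurable_uncurry_mul_nker hG))
    fun x y => mul_nonneg (sq_nonneg _) (mul_nker_nonneg hα0 hα2 hG0 x y)).1 hNG

theorem integrable_mul_mul_nker_of_lintegral_NG_ne_top (hα0 : 0 < α) (hα2 : α < 2)
    (hu : Measurable u) (hG : Measurable (Function.uncurry G)) (hG0 : ∀ x y, 0 ≤ G x y)
    (hGs : ∀ x y, G x y = G y x) (hNG : ∫⁻ x, ENNReal.ofReal (u x ^ 2) * NG d α m G x ≠ ⊤) :
    Integrable (fun p : V d × V d => u p.1 * u p.2 * (G p.1 p.2 * nker d α m p.1 p.2))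
      (volume.prod volume) :=
  (integrable_sq_mul_nker_of_lintegral_NG_ne_top hα0 hα2 hu hG hG0 hNG).mul_mul_of_sq_mul
    hu (measurable_uncurry_mul_nker hG) (mul_nker_nonneg hα0 hα2 hG0) (mul_nker_comm hGs)

theorem Jform_ne_top_of_lintegral_NG_ne_top (hα0 : 0 < α) (hα2 : α < 2)
    (hu : Measurable u) (hG : Measurable (Function.uncurry G)) (hG0 : ∀ x y, 0 ≤ G x y)
    (hGs : ∀ x y, G x y = G y x) (hNG : ∫⁻ x, ENNReal.ofReal (u x ^ 2) * NG d α m G x ≠ ⊤) :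
    Jform d α m G u ≠ ⊤ := by
  rw [Jform_eq_lintegral_lintegral, lintegral_lintegral_ofReal_ne_top_iff
    (measurable_sub_sq_mul hu (measurable_uncurry_mul_nker hG))
    fun x y => mul_nonneg (sq_nonneg _) (mul_nker_nonneg hα0 hα2 hG0 x y)]
  exact (integrable_sq_mul_nker_of_lintegral_NG_ne_top hα0 hα2 hu hG hG0 hNG).sub_sq_mul_of_sq_mul
    hu (measurable_uncurry_mul_nker hG) (mul_nker_nonneg hα0 hα2 hG0) (mul_nker_comm hGs)

theorem toReal_Jform_of_lintegral_NG_ne_top (hα0 : 0 < α) (hα2 : α < 2)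
    (hu : Measurable u) (hG : Measurable (Function.uncurry G)) (hG0 : ∀ x y, 0 ≤ G x y)
    (hGs : ∀ x y, G x y = G y x) (hNG : ∫⁻ x, ENNReal.ofReal (u x ^ 2) * NG d α m G x ≠ ⊤) :
    (Jform d α m G u).toReal = 2 * ((∫⁻ x, ENNReal.ofReal (u x ^ 2) * NG d α m G x).toReal
      - ∫ p, u p.1 * u p.2 * (G p.1 p.2 * nker d α m p.1 p.2) ∂volume.prod volume) := by
  have hk := measurable_uncurry_mul_nker (α := α) (m := m) hG
  have hk0 := mul_nker_nonneg (m := m) hα0 hα2 hG0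
  rw [Jform_eq_lintegral_lintegral, lintegral_sq_mul_NG,
    toReal_lintegral_lintegral_ofReal (measurable_sub_sq_mul hu hk)
      fun x y => mul_nonneg (sq_nonneg _) (hk0 x y),
    toReal_lintegral_lintegral_ofReal (measurable_sq_mul hu hk)
      fun x y => mul_nonneg (sq_nonneg _) (hk0 x y)]
  exact integral_sub_sq_mul_eq_of_symm hu hk hk0 (mul_nker_comm hGs)
    (integrable_sq_mul_nker_of_lintegral_NG_ne_top hα0 hα2 hu hG hG0 hNG)

theorem mul_exp_sub_one_mul_nker_eq (F : V d → V d → ℝ) :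
    (fun p : V d × V d => u p.1 * u p.2 * (exp (F p.1 p.2) - 1) * nker d α m p.1 p.2)
      = (fun p => u p.1 * u p.2 * (Gp d F p.1 p.2 * nker d α m p.1 p.2))
        - fun p => u p.1 * u p.2 * (Gm d F p.1 p.2 * nker d α m p.1 p.2) := by
  ext p
  rw [Pi.sub_apply, exp_sub_one_eq_Gp_sub_Gm]
  ring

end JumpForms

theorem schrodinger_form_killed_identity_general
    (d : ℕ) (α m : ℝ) (hα0 : 0 < α) (hα2 : α < 2)
    (F : V d → V d → ℝ) (hFmeas : Measurable (Function.uncurry F))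
    (hFsymm : ∀ x y, F x y = F y x)
    (μp μm : Measure (V d))
    (u : V d → ℝ) (hu : Measurable u)
    (hE : En d α m u ≠ ⊤)
    (hμp : sqInt d u μp ≠ ⊤) (hμm : sqInt d u μm ≠ ⊤)
    (hNGp : ∫⁻ x, ENNReal.ofReal ((u x) ^ 2) * NG d α m (Gp d F) x ≠ ⊤)
    (hNGm : ∫⁻ x, ENNReal.ofReal ((u x) ^ 2) * NG d α m (Gm d F) x ≠ ⊤) :
    Integrable
      (fun p : V d × V d => u p.1 * u p.2 * (Real.exp (F p.1 p.2) - 1) * nker d α m p.1 p.2) ∧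
    EnMinus d α m F μm u ≠ ⊤ ∧ Jform d α m (Gp d F) u ≠ ⊤ ∧
    sqInt d u (rho d α m (Gp d F) μp) ≠ ⊤ ∧
    EmuF d α m F μp μm u
      = (EnMinus d α m F μm u).toReal
        + (1 / 2) * (Jform d α m (Gp d F) u).toReal
        - (sqInt d u (rho d α m (Gp d F) μp)).toReal := by
  have hGp := measurable_Gp (d := d) hFmeas
  have hGm := measurable_Gm (d := d) hFmeas
  have hGp0 := Gp_nonneg F
  have hGm0 := Gm_nonneg F
  have hGps := Gp_comm F hFsymm
  have hGms := Gm_comm F hFsymm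
  have hIp := integrable_mul_mul_nker_of_lintegral_NG_ne_top hα0 hα2 hu hGp hGp0 hGps hNGp
  have hIm := integrable_mul_mul_nker_of_lintegral_NG_ne_top hα0 hα2 hu hGm hGm0 hGms hNGm
  have hJe := Jform_exp_neg_Fm_ne_top hα0 hα2 hu hFmeas hE
  have hJp := Jform_ne_top_of_lintegral_NG_ne_top hα0 hα2 hu hGp hGp0 hGps hNGp
  have hJm := Jform_ne_top_of_lintegral_NG_ne_top hα0 hα2 hu hGm hGm0 hGms hNGm
  refine ⟨?_, ?_, hJp, ?_, ?_⟩
  · rw [Measure.volume_eq_prod, mul_exp_sub_one_mul_nker_eq]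
    exact hIp.sub hIm
  · rw [EnMinus_eq hu hGm]
    finiteness
  · rw [sqInt_rho hu hGp]
    finiteness
  · rw [EmuF, crossInt, EnMinus_eq hu hGm, sqInt_rho hu hGp, En_eq_half_Jform hα0 hα2 hu hFmeas,
      Measure.volume_eq_prod, mul_exp_sub_one_mul_nker_eq, integral_sub' hIp hIm,
      ENNReal.toReal_mul, ENNReal.toReal_add hJe hJm, ENNReal.toReal_add (by finiteness)
        (by finiteness), ENNReal.toReal_mul, ENNReal.toReal_add hμm hNGm,
      ENNReal.toReal_add hμp hNGp,
      toReal_Jform_of_lintegral_NG_ne_top hα0 hα2 hu hGp hGp0 hGps hNGp,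
      toReal_Jform_of_lintegral_NG_ne_top hα0 hα2 hu hGm hGm0 hGms hNGm,
      ENNReal.toReal_div, ENNReal.toReal_one, ENNReal.toReal_ofNat]
    ring

/-- `𝓔^{μ,F}(u,u) = 𝓔⁻(u,u) + (1/2)∬ (u(x)-u(y))² G⁺(x,y) n(x,y) dx dy - ∫ u² dρ⁺`,
and all integrals appearing are finite. -/
theorem schrodinger_form_killed_identity
    (d : ℕ) (hd : 1 ≤ d) (α m : ℝ) (hα0 : 0 < α) (hα2 : α < 2) (hm : 0 ≤ m)
    (F : V d → V d → ℝ) (hFmeas : Measurable (Function.uncurry F))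
    (hFbound : ∃ M : ℝ, ∀ x y, |F x y| ≤ M)
    (hFsymm : ∀ x y, F x y = F y x) (hFdiag : ∀ x, F x x = 0)
    (μp μm : Measure (V d))
    (u : V d → ℝ) (hu : Measurable u)
    (hE : En d α m u ≠ ⊤)
    (hμp : sqInt d u μp ≠ ⊤) (hμm : sqInt d u μm ≠ ⊤)
    (hNGp : ∫⁻ x, ENNReal.ofReal ((u x) ^ 2) * NG d α m (Gp d F) x ≠ ⊤)
    (hNGm : ∫⁻ x, ENNReal.ofReal ((u x) ^ 2) * NG d α m (Gm d F) x ≠ ⊤) :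
    Integrable
      (fun p : V d × V d => u p.1 * u p.2 * (Real.exp (F p.1 p.2) - 1) * nker d α m p.1 p.2) ∧
    EnMinus d α m F μm u ≠ ⊤ ∧ Jform d α m (Gp d F) u ≠ ⊤ ∧
    sqInt d u (rho d α m (Gp d F) μp) ≠ ⊤ ∧
    EmuF d α m F μp μm u
      = (EnMinus d α m F μm u).toReal
        + (1 / 2) * (Jform d α m (Gp d F) u).toReal
        - (sqInt d u (rho d α m (Gp d F) μp)).toReal :=
  schrodinger_form_killed_identity_general d α m hα0 hα2 F hFmeas hFsymm μp μm u hu hE hμp hμm hNGp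
    hNGm
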